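/- If w is a nonnegative locally integrable function on the real line and 0 < δ < 1, then (M⁻f)^δ belongs to the one-sided Muckenhoupt class A₁⁺ for every locally integrable f with M⁻f finite a.e., with A₁⁺-constant at most C/(1−δ) for an absolute constant C. -/

import Mathlib

/-!
Fix `x` with `M = M⁻f(x) < ∞` and `I = (x - h, x]`, and split `f = f₁ + f₂` with
`f₁ = f · 1_{(x - 2h, x]}`. On `I` the far part is harmless, `M⁻f₂ ≤ 2M`, because a left interval
ending in `I` that meets the support of `f₂` at most doubles when it is extended to end at `x`.
The near part has `‖f₁‖₁ ≤ 2hM`, so the weak type `(1,1)` bound for `M⁻` gives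
`|{t ∈ I : M⁻f₁(t) > 16M 2ᵏ}| ≤ h / 2ᵏ`, and summing over these dyadic level sets
(Kolmogorov's inequality) gives `∫_I (M⁻f₁)^δ ≲ h M^δ / (1 - δ)`, the factor `1/(1 - δ)` being the
geometric series `∑ 2^{(δ-1)k}`. Hence the average of `(M⁻f)^δ` over `I` is `≲ M^δ / (1 - δ)`.
-/

open MeasureTheory Set Filter FourierTransform ENNReal NNReal

noncomputable section

/-- One-sided (left) Hardy–Littlewood maximal operator. -/
def Mminus (f : ℝ → ℝ) (x : ℝ) : ℝ≥0∞ :=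
  ⨆ (h : ℝ) (_ : 0 < h),
    (∫⁻ t in Set.Ioc (x - h) x, ENNReal.ofReal |f t|) / ENNReal.ofReal h

/-- One-sided (right) Hardy–Littlewood maximal operator. -/
def Mplus (f : ℝ → ℝ) (x : ℝ) : ℝ≥0∞ :=
  ⨆ (h : ℝ) (_ : 0 < h),
    (∫⁻ t in Set.Ioc x (x + h), ENNReal.ofReal |f t|) / ENNReal.ofReal h

/-- One-sided (left) maximal operator with exponent `r`. -/
def MminusR (r : ℝ) (f : ℝ → ℝ) (x : ℝ) : ℝ≥0∞ :=
  ⨆ (h : ℝ) (_ : 0 < h),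
    ((∫⁻ t in Set.Ioc (x - h) x, ENNReal.ofReal (|f t| ^ r)) / ENNReal.ofReal h) ^ (1 / r)

/-- `w ∈ A₁⁺` with constant `C` : `M⁻w ≤ C w` a.e. -/
def A1PlusWith (w : ℝ → ℝ) (C : ℝ) : Prop :=
  ∀ᵐ x : ℝ, Mminus w x ≤ ENNReal.ofReal (C * w x)

/-- `w ∈ A₁⁻` with constant `C` : `M⁺w ≤ C w` a.e. -/
def A1MinusWith (w : ℝ → ℝ) (C : ℝ) : Prop :=
  ∀ᵐ x : ℝ, Mplus w x ≤ ENNReal.ofReal (C * w x)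

/-- `w ∈ A_p⁺` with constant `C`, for `1 < p`. -/
def ApPlusWith (p : ℝ) (w : ℝ → ℝ) (C : ℝ) : Prop :=
  ∀ a x b : ℝ, a < x → x < b →
    (∫ t in Set.Ioo a x, w t) *
      (∫ t in Set.Ioo x b, (w t) ^ (-1 / (p - 1))) ^ (p - 1) ≤ C * (b - a) ^ p

/-- `w ∈ A_p⁻` with constant `C`, for `1 < p`. -/
def ApMinusWith (p : ℝ) (w : ℝ → ℝ) (C : ℝ) : Prop :=
  ∀ a x b : ℝ, a < x → x < b →
    (∫ t in Set.Ioo x b, w t) *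
      (∫ t in Set.Ioo a x, (w t) ^ (-1 / (p - 1))) ^ (p - 1) ≤ C * (b - a) ^ p

/-- A Calderón–Zygmund kernel on `ℝ` with support in the set `S` and constants `c₁ c₂ c₃`. -/
def IsOneSidedCZKernel (K : ℝ → ℝ) (S : Set ℝ) (c₁ c₂ c₃ : ℝ) : Prop :=
  MeasureTheory.LocallyIntegrableOn K {x : ℝ | x ≠ 0} volume ∧
  Function.support K ⊆ S ∧
  (∀ ξ : ℝ, ‖𝓕 (fun x : ℝ => (K x : ℂ)) ξ‖ ≤ c₁) ∧
  (∀ x : ℝ, x ≠ 0 → |K x| ≤ c₂ / |x|) ∧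
  (∀ x y : ℝ, |y| < |x| / 2 → |K x - K (x - y)| ≤ c₃ * |y| / x ^ 2)

/-- `T⁺` : one-sided singular integral with kernel supported in `(-∞,0)`. -/
def Tplus (K : ℝ → ℝ) (f : ℝ → ℝ) (x : ℝ) : ℝ :=
  limUnder (nhdsWithin (0:ℝ) (Set.Ioi 0)) fun ε => ∫ y in Set.Ioi (x + ε), K (x - y) * f y

/-- `T⁻` : one-sided singular integral with kernel supported in `(0,∞)`. -/
def Tminus (K : ℝ → ℝ) (f : ℝ → ℝ) (x : ℝ) : ℝ :=
  limUnder (nhdsWithin (0:ℝ) (Set.Ioi 0)) fun ε => ∫ y in Set.Iic (x - ε), K (x - y) * f y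

/-- Maximal truncated operator associated to the kernel `K`. -/
def Tstar (K : ℝ → ℝ) (f : ℝ → ℝ) (x : ℝ) : ℝ≥0∞ :=
  ⨆ (ε : ℝ) (_ : 0 < ε),
    ∫⁻ y in {y : ℝ | ε < |x - y|}, ENNReal.ofReal (|K (x - y)| * |f y|)

/-- Weighted `L^p` norm `‖g‖_{L^p(w)}`. -/
def wLpNorm (p : ℝ) (w g : ℝ → ℝ) : ℝ≥0∞ :=
  (∫⁻ x : ℝ, ENNReal.ofReal (|g x| ^ p * w x)) ^ (1 / p)

/-- Weighted measure `w(E) = ∫_E w`. -/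
def wMeasure (w : ℝ → ℝ) (E : Set ℝ) : ℝ≥0∞ :=
  ∫⁻ x in E, ENNReal.ofReal (w x)

namespace ENNReal

lemma rpow_le_self_of_one_le {c : ℝ≥0∞} (hc : 1 ≤ c) {δ : ℝ} (hδ : δ ≤ 1) : c ^ δ ≤ c :=
  (rpow_le_rpow_of_exponent_le hc hδ).trans_eq (rpow_one c)

lemma mul_rpow_le_mul_rpow_of_one_le {c : ℝ≥0∞} (hc : 1 ≤ c) (a : ℝ≥0∞) {δ : ℝ} (hδ0 : 0 ≤ δ)
    (hδ1 : δ ≤ 1) : (c * a) ^ δ ≤ c * a ^ δ := by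
  rw [mul_rpow_of_nonneg _ _ hδ0]
  exact mul_le_mul_left (rpow_le_self_of_one_le hc hδ1) _

lemma eq_zero_of_forall_le_div_two_pow {a H : ℝ≥0∞} (hH : H ≠ ⊤) (h : ∀ k : ℕ, a ≤ H / 2 ^ k) :
    a = 0 := by
  have hlim : Tendsto (fun k : ℕ => H / 2 ^ k) atTop (nhds 0) := by
    simpa [div_eq_mul_inv, ENNReal.inv_pow] using ENNReal.Tendsto.const_mul
      (tendsto_pow_atTop_nhds_zero_of_lt_one (by norm_num : (2⁻¹ : ℝ≥0∞) < 1)) (.inr hH)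
  exact le_antisymm (ge_of_tendsto' hlim h) zero_le

lemma le_or_exists_dyadic_or_forall_lt (a b : ℝ≥0∞) :
    a ≤ b ∨ (∃ k : ℕ, b * 2 ^ k < a ∧ a ≤ b * 2 ^ (k + 1)) ∨ ∀ k : ℕ, b * 2 ^ k < a := by
  by_cases hall : ∀ k : ℕ, b * 2 ^ k < a
  · exact .inr (.inr hall)
  simp only [not_forall, not_lt] at hall
  cases hk : Nat.find hall with
  | zero => exact .inl (by simpa [hk] using Nat.find_spec hall)
  | succ j => exact .inr (.inl ⟨j, not_le.1 (Nat.find_min hall (hk ▸ j.lt_succ_self)),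
      hk ▸ Nat.find_spec hall⟩)

/-- Bernoulli's inequality `(1/2)^{1-δ} ≤ 1 - (1-δ)/2`. -/
lemma ofReal_one_sub_div_two_le_one_sub_two_rpow {δ : ℝ} (hδ0 : 0 ≤ δ) (hδ1 : δ ≤ 1) :
    ENNReal.ofReal ((1 - δ) / 2) ≤ 1 - 2 ^ (δ - 1) := by
  have hbernoulli : (2 : ℝ) ^ (δ - 1) ≤ 1 - (1 - δ) / 2 := by
    have h := rpow_one_add_le_one_add_mul_self (by norm_num : (-1 : ℝ) ≤ -2⁻¹)
      (sub_nonneg.2 hδ1) (by linarith)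
    rw [show (1 : ℝ) + -2⁻¹ = 2⁻¹ by norm_num, Real.inv_rpow zero_le_two,
      ← Real.rpow_neg zero_le_two, neg_sub] at h
    linarith
  rw [← ofReal_ofNat 2, ofReal_rpow_of_pos two_pos, ← ofReal_one, ← ofReal_sub _ (by positivity)]
  exact ofReal_le_ofReal (by linarith)

/-- The sum is `2^δ / (1 - 2^{δ-1})`. -/
lemma tsum_two_pow_succ_rpow_div_two_pow_le {δ : ℝ} (hδ0 : 0 ≤ δ) (hδ1 : δ < 1) :
    ∑' k : ℕ, ((2 : ℝ≥0∞) ^ (k + 1)) ^ δ / 2 ^ k ≤ ENNReal.ofReal (4 / (1 - δ)) := by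
  have hterm : ∀ k : ℕ, ((2 : ℝ≥0∞) ^ (k + 1)) ^ δ / 2 ^ k = 2 ^ δ * (2 ^ (δ - 1)) ^ k := by
    intro k
    rw [← rpow_natCast, ← rpow_mul, ← rpow_natCast, ← rpow_natCast, ← rpow_mul, div_eq_mul_inv,
      ← rpow_neg, ← rpow_add _ _ two_ne_zero ofNat_ne_top, ← rpow_add _ _ two_ne_zero ofNat_ne_top]
    congr 1
    push_cast
    ring
  have hinv : (1 - (2 : ℝ≥0∞) ^ (δ - 1))⁻¹ ≤ ENNReal.ofReal (2 / (1 - δ)) :=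
    calc (1 - (2 : ℝ≥0∞) ^ (δ - 1))⁻¹ ≤ (ENNReal.ofReal ((1 - δ) / 2))⁻¹ :=
          ENNReal.inv_le_inv' (ofReal_one_sub_div_two_le_one_sub_two_rpow hδ0 hδ1.le)
      _ = ENNReal.ofReal (2 / (1 - δ)) := by
          rw [← ofReal_inv_of_pos (by linarith), inv_div]
  calc ∑' k : ℕ, ((2 : ℝ≥0∞) ^ (k + 1)) ^ δ / 2 ^ k
      = 2 ^ δ * (1 - 2 ^ (δ - 1))⁻¹ := by simp only [hterm, ENNReal.tsum_mul_left, tsum_geometric]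
    _ ≤ 2 * ENNReal.ofReal (2 / (1 - δ)) :=
        mul_le_mul' (rpow_le_self_of_one_le one_le_two hδ1.le) hinv
    _ = ENNReal.ofReal (4 / (1 - δ)) := by
        rw [← ofReal_ofNat 2, ← ofReal_mul zero_le_two]
        ring_nf

end ENNReal

section Kolmogorov

variable {α : Type*} [MeasurableSpace α] {μ : Measure α}

lemma setLIntegral_rpow_le_of_le {δ : ℝ} (hδ : 0 ≤ δ) {u : α → ℝ≥0∞} {s : Set α}
    (hs : MeasurableSet s) {c m : ℝ≥0∞} (hu : ∀ t ∈ s, u t ≤ c) (hμ : μ s ≤ m) :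
    ∫⁻ t in s, u t ^ δ ∂μ ≤ c ^ δ * m :=
  calc ∫⁻ t in s, u t ^ δ ∂μ ≤ ∫⁻ _ in s, c ^ δ ∂μ :=
        setLIntegral_mono' hs fun t ht => ENNReal.rpow_le_rpow (hu t ht) hδ
    _ ≤ c ^ δ * m := by
        rw [setLIntegral_const]
        exact mul_le_mul_right hμ _

/-- Kolmogorov's inequality, in dyadic form: `u` is split into its dyadic layers
`c 2ᵏ < u ≤ c 2ᵏ⁺¹`, each contributing at most `(c 2ᵏ⁺¹)^δ H / 2ᵏ`. -/
theorem setLIntegral_rpow_le_of_measure_dyadic_level_set_le {δ : ℝ} (hδ0 : 0 ≤ δ) (hδ1 : δ < 1)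
    {u : α → ℝ≥0∞} (hu : Measurable u) {I : Set α} (hI : MeasurableSet I) {H c : ℝ≥0∞}
    (hH : H ≠ ⊤) (hIH : μ I ≤ H)
    (hlevel : ∀ k : ℕ, μ (I ∩ {t | c * 2 ^ k < u t}) ≤ H / 2 ^ k) :
    ∫⁻ t in I, u t ^ δ ∂μ ≤ ENNReal.ofReal (5 / (1 - δ)) * c ^ δ * H := by
  set A := I ∩ {t | u t ≤ c}
  set B : ℕ → Set α := fun k => I ∩ {t | c * 2 ^ k < u t ∧ u t ≤ c * 2 ^ (k + 1)}
  set C := I ∩ {t | ∀ k : ℕ, c * 2 ^ k < u t}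
  have hcover : I ⊆ A ∪ C ∪ ⋃ k, B k := fun t ht => by
    rcases ENNReal.le_or_exists_dyadic_or_forall_lt (u t) c with hA | ⟨k, hB⟩ | hC
    exacts [.inl (.inl ⟨ht, hA⟩), .inr (mem_iUnion.2 ⟨k, ht, hB⟩), .inl (.inr ⟨ht, hC⟩)]
  have hC : μ C = 0 := ENNReal.eq_zero_of_forall_le_div_two_pow hH fun k =>
    (measure_mono fun t (ht : t ∈ C) => (⟨ht.1, ht.2 k⟩ : t ∈ I ∩ _)).trans (hlevel k)
  have hB : ∀ k, ∫⁻ t in B k, u t ^ δ ∂μ ≤ c ^ δ * H * (((2 : ℝ≥0∞) ^ (k + 1)) ^ δ / 2 ^ k) := by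
    intro k
    have hBk : MeasurableSet (B k) := hI.inter ((measurableSet_lt measurable_const hu).inter
      (measurableSet_le hu measurable_const))
    calc ∫⁻ t in B k, u t ^ δ ∂μ ≤ (c * 2 ^ (k + 1)) ^ δ * (H / 2 ^ k) :=
          setLIntegral_rpow_le_of_le hδ0 hBk (fun t ht => ht.2.2)
            ((measure_mono fun t (ht : t ∈ B k) => (⟨ht.1, ht.2.1⟩ : t ∈ I ∩ _)).trans (hlevel k))
      _ = c ^ δ * H * (((2 : ℝ≥0∞) ^ (k + 1)) ^ δ / 2 ^ k) := by
          rw [ENNReal.mul_rpow_of_nonneg _ _ hδ0, ENNReal.div_eq_inv_mul, ENNReal.div_eq_inv_mul]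
          ring
  calc ∫⁻ t in I, u t ^ δ ∂μ ≤ ∫⁻ t in A ∪ C ∪ ⋃ k, B k, u t ^ δ ∂μ := lintegral_mono_set hcover
    _ ≤ ∫⁻ t in A, u t ^ δ ∂μ + ∫⁻ t in C, u t ^ δ ∂μ + ∑' k, ∫⁻ t in B k, u t ^ δ ∂μ :=
        (lintegral_union_le _ _ _).trans
          (add_le_add (lintegral_union_le _ _ _) (lintegral_iUnion_le _ _))
    _ ≤ c ^ δ * H + 0 + ∑' k : ℕ, c ^ δ * H * (((2 : ℝ≥0∞) ^ (k + 1)) ^ δ / 2 ^ k) := by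
        gcongr with k
        · exact setLIntegral_rpow_le_of_le hδ0 (hI.inter (measurableSet_le hu measurable_const))
            (fun t ht => ht.2) ((measure_mono inter_subset_left).trans hIH)
        · exact (setLIntegral_measure_zero _ _ hC).le
        · exact hB k
    _ = c ^ δ * H * (1 + ∑' k : ℕ, ((2 : ℝ≥0∞) ^ (k + 1)) ^ δ / 2 ^ k) := by
        rw [ENNReal.tsum_mul_left]; ring
    _ ≤ c ^ δ * H * (1 + ENNReal.ofReal (4 / (1 - δ))) := by
        gcongr; exact ENNReal.tsum_two_pow_succ_rpow_div_two_pow_le hδ0 hδ1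
    _ ≤ ENNReal.ofReal (5 / (1 - δ)) * c ^ δ * H := by
        rw [mul_comm, ← mul_assoc]
        gcongr
        rw [← ENNReal.ofReal_one, ← ENNReal.ofReal_add zero_le_one
          (div_nonneg zero_le_four (sub_nonneg.2 hδ1.le))]
        refine ENNReal.ofReal_le_ofReal ?_
        rw [one_add_div (sub_ne_zero.2 hδ1.ne')]
        exact div_le_div_of_nonneg_right (by linarith) (by linarith)

end Kolmogorov

section LeftMaximalFunction

variable (f : ℝ → ℝ)

lemma lintegral_Ioc_div_le_Mminus (x : ℝ) {s : ℝ} (hs : 0 < s) :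
    (∫⁻ t in Ioc (x - s) x, ENNReal.ofReal |f t|) / ENNReal.ofReal s ≤ Mminus f x :=
  le_iSup₂ (f := fun (s : ℝ) (_ : 0 < s) =>
    (∫⁻ t in Ioc (x - s) x, ENNReal.ofReal |f t|) / ENNReal.ofReal s) s hs

lemma lintegral_Ioc_le_Mminus_mul (x : ℝ) {s : ℝ} (hs : 0 < s) :
    ∫⁻ t in Ioc (x - s) x, ENNReal.ofReal |f t| ≤ Mminus f x * ENNReal.ofReal s :=
  (ENNReal.div_le_iff (by simpa using hs) ofReal_ne_top).1 (lintegral_Ioc_div_le_Mminus f x hs)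

lemma lintegral_Ioc_le_Mminus_mul_of_le {t x : ℝ} (htx : t ≤ x) {s : ℝ} (hs : 0 < s) :
    ∫⁻ y in Ioc (t - s) t, ENNReal.ofReal |f y| ≤ Mminus f x * ENNReal.ofReal (x - t + s) :=
  calc ∫⁻ y in Ioc (t - s) t, ENNReal.ofReal |f y|
      ≤ ∫⁻ y in Ioc (x - (x - t + s)) x, ENNReal.ofReal |f y| :=
        lintegral_mono_set (Ioc_subset_Ioc (by linarith) htx)
    _ ≤ _ := lintegral_Ioc_le_Mminus_mul f x (by linarith)

lemma Mminus_eq_zero_of_le {t x : ℝ} (htx : t ≤ x) (hx : Mminus f x = 0) : Mminus f t = 0 := by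
  refine le_antisymm (iSup₂_le fun s hs => ?_) zero_le
  have h := lintegral_Ioc_le_Mminus_mul_of_le f htx hs
  rw [hx, zero_mul, nonpos_iff_eq_zero] at h
  rw [h, ENNReal.zero_div]

lemma Mminus_eq_iSup_rat (x : ℝ) :
    Mminus f x = ⨆ (q : ℚ) (_ : (0 : ℝ) < q),
      (∫⁻ t in Ioc (x - q) x, ENNReal.ofReal |f t|) / ENNReal.ofReal q := by
  refine le_antisymm (iSup₂_le fun h hh => ?_)
    (iSup₂_le fun q hq => lintegral_Ioc_div_le_Mminus f x hq)
  refine ENNReal.le_of_forall_lt_one_mul_le fun a ha => ?_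
  rcases eq_or_ne a 0 with rfl | ha0
  · simp
  have hα : 0 < a.toReal := ENNReal.toReal_pos ha0 ha.ne_top
  have hα1 : a.toReal < 1 := by simpa using ENNReal.toReal_strict_mono one_ne_top ha
  obtain ⟨q, hhq, hqh⟩ := exists_rat_btwn ((lt_div_iff₀ hα).2 (by nlinarith) : h < h / a.toReal)
  have hq : (0 : ℝ) < q := hh.trans hhq
  have hscale : a / ENNReal.ofReal h ≤ (ENNReal.ofReal q)⁻¹ := by
    rw [← ENNReal.ofReal_toReal ha.ne_top, ← ENNReal.ofReal_div_of_pos hh,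
      ← ENNReal.ofReal_inv_of_pos hq]
    refine ENNReal.ofReal_le_ofReal ?_
    rw [div_le_iff₀ hh, inv_mul_eq_div, le_div_iff₀ hq]
    linarith [(lt_div_iff₀ hα).1 hqh]
  calc a * ((∫⁻ t in Ioc (x - h) x, ENNReal.ofReal |f t|) / ENNReal.ofReal h)
      = (∫⁻ t in Ioc (x - h) x, ENNReal.ofReal |f t|) * (a / ENNReal.ofReal h) := by
        rw [ENNReal.div_eq_inv_mul, ENNReal.div_eq_inv_mul]; ring
    _ ≤ (∫⁻ t in Ioc (x - q) x, ENNReal.ofReal |f t|) * (ENNReal.ofReal q)⁻¹ :=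
        mul_le_mul' (lintegral_mono_set (Ioc_subset_Ioc_left (by linarith))) hscale
    _ ≤ _ := le_iSup₂ (f := fun (q : ℚ) (_ : (0 : ℝ) < q) =>
          (∫⁻ t in Ioc (x - q) x, ENNReal.ofReal |f t|) / ENNReal.ofReal q) q hq

/-- `M⁻f` is a countable supremum of differences of the monotone function
`F x = ∫_{(-∞, x]} |f|`. -/
lemma measurable_Mminus (hf : ∫⁻ t, ENNReal.ofReal |f t| ≠ ⊤) : Measurable (Mminus f) := by
  set F : ℝ → ℝ≥0∞ := fun x => ∫⁻ t in Iic x, ENNReal.ofReal |f t|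
  have hF_mono : Monotone F := fun a b hab => lintegral_mono_set (Iic_subset_Iic.2 hab)
  have hdiff : ∀ (x : ℝ) (q : ℚ), (0 : ℝ) < q →
      ∫⁻ t in Ioc (x - q) x, ENNReal.ofReal |f t| = F x - F (x - q) := by
    intro x q hq
    have hsplit : F x = F (x - q) + ∫⁻ t in Ioc (x - q) x, ENNReal.ofReal |f t| := by
      simp only [F]
      rw [← Iic_union_Ioc_eq_Iic (by linarith : x - q ≤ x),
        lintegral_union measurableSet_Ioc (Iic_disjoint_Ioc le_rfl)]
    rw [hsplit, ENNReal.add_sub_cancel_left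
      (ne_top_of_le_ne_top hf (setLIntegral_le_lintegral _ _))]
  have hMminus : Mminus f = fun x => ⨆ (q : ℚ) (_ : (0 : ℝ) < q),
      (F x - F (x - q)) / ENNReal.ofReal q := by
    funext x
    rw [Mminus_eq_iSup_rat]
    exact iSup_congr fun q => iSup_congr fun hq => by rw [hdiff x q hq]
  rw [hMminus]
  refine Measurable.iSup fun q => ?_
  by_cases hq : (0 : ℝ) < q
  · simp only [hq, iSup_pos]
    exact (hF_mono.measurable.sub
      (hF_mono.measurable.comp (measurable_id.sub measurable_const))).div_const _
  · simp only [hq, not_false_iff, iSup_neg, measurable_const]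

lemma exists_lintegral_Ioc_ge_of_lt_Mminus {l : ℝ≥0∞} (hl : l ≠ 0)
    (hf : ∫⁻ y, ENNReal.ofReal |f y| ≠ ⊤) {t : ℝ} (ht : l < Mminus f t) :
    ∃ s, 0 < s ∧ s ≤ ((∫⁻ y, ENNReal.ofReal |f y|) / l).toReal ∧
      l * ENNReal.ofReal s ≤ ∫⁻ y in Ioc (t - s) t, ENNReal.ofReal |f y| := by
  simp only [Mminus, lt_iSup_iff] at ht
  obtain ⟨s, hs, hlt⟩ := ht
  rw [ENNReal.lt_div_iff_mul_lt (.inl (by simpa using hs)) (.inl ofReal_ne_top)] at hlt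
  have hsf : ENNReal.ofReal s ≤ (∫⁻ y, ENNReal.ofReal |f y|) / l := by
    rw [ENNReal.le_div_iff_mul_le (.inl hl) (.inr hf), mul_comm]
    exact hlt.le.trans (setLIntegral_le_lintegral _ _)
  exact ⟨s, hs, by simpa [hs.le] using ENNReal.toReal_mono (ENNReal.div_ne_top hf hl) hsf, hlt.le⟩

open Metric in
theorem mul_volume_lt_Mminus_le (l : ℝ≥0∞) :
    l * volume {t | l < Mminus f t} ≤ 8 * ∫⁻ t, ENNReal.ofReal |f t| := by
  rcases eq_or_ne l 0 with rfl | hl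
  · simp
  rcases eq_or_ne (∫⁻ t, ENNReal.ofReal |f t|) ⊤ with hf | hf
  · simp [hf]
  set E := {t | l < Mminus f t}
  choose! r hr0 hrR hr using fun t (ht : t ∈ E) => exists_lintegral_Ioc_ge_of_lt_Mminus f hl hf ht
  obtain ⟨u, huE, hdisj, hcov⟩ :=
    Vitali.exists_disjoint_subfamily_covering_enlargement_closedBall E id r _ hrR 4 (by norm_num)
  simp only [id] at hdisj hcov
  have hu : u.Countable := hdisj.countable_of_nonempty_interior fun b hb =>
    (nonempty_ball.2 (hr0 b (huE hb))).mono ball_subset_interior_closedBall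
  have hEcov : E ⊆ ⋃ b ∈ u, closedBall b (4 * r b) := fun t ht => by
    obtain ⟨b, hb, hsub⟩ := hcov t ht
    exact mem_biUnion hb (hsub (mem_closedBall_self (hr0 t ht).le))
  have hIoc_disj : u.PairwiseDisjoint fun b => Ioc (b - r b) b :=
    hdisj.mono_on fun b _ y hy => by
      rw [mem_closedBall, Real.dist_eq, abs_le]
      constructor <;> linarith [hy.1, hy.2]
  calc l * volume E ≤ l * ∑' b : u, volume (closedBall (b : ℝ) (4 * r b)) :=
        mul_le_mul_right ((measure_mono hEcov).trans (measure_biUnion_le volume hu _)) l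
    _ = ∑' b : u, 8 * (l * ENNReal.ofReal (r b)) := by
        rw [← ENNReal.tsum_mul_left]
        congr 1 with b
        rw [Real.volume_closedBall, show 2 * (4 * r b) = 8 * r b by ring,
          ENNReal.ofReal_mul (by norm_num), ENNReal.ofReal_ofNat]
        ring
    _ ≤ ∑' b : u, 8 * ∫⁻ y in Ioc ((b : ℝ) - r b) b, ENNReal.ofReal |f y| :=
        ENNReal.tsum_le_tsum fun b => mul_le_mul_right (hr b (huE b.2)) 8
    _ = 8 * ∫⁻ y in ⋃ b ∈ u, Ioc (b - r b) b, ENNReal.ofReal |f y| := by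
        rw [ENNReal.tsum_mul_left, lintegral_biUnion hu (fun b _ => measurableSet_Ioc) hIoc_disj]
    _ ≤ 8 * ∫⁻ t, ENNReal.ofReal |f t| := mul_le_mul_right (setLIntegral_le_lintegral _ _) 8

lemma volume_inter_dyadic_level_set_le {c H : ℝ≥0∞} (hc0 : c ≠ 0) (hc : c ≠ ⊤)
    (hf : ∫⁻ t, ENNReal.ofReal |f t| ≤ c * H) (J : Set ℝ) (k : ℕ) :
    volume (J ∩ {t | 8 * c * 2 ^ k < Mminus f t}) ≤ H / 2 ^ k := by
  rw [ENNReal.le_div_iff_mul_le (.inl (pow_ne_zero _ two_ne_zero))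
    (.inl (ENNReal.pow_ne_top ofNat_ne_top)), ← ENNReal.mul_le_mul_iff_right
    (mul_ne_zero (by norm_num : (8 : ℝ≥0∞) ≠ 0) hc0) (ENNReal.mul_ne_top ofNat_ne_top hc)]
  calc 8 * c * (volume (J ∩ {t | 8 * c * 2 ^ k < Mminus f t}) * 2 ^ k)
      = 8 * c * 2 ^ k * volume (J ∩ {t | 8 * c * 2 ^ k < Mminus f t}) := by ring
    _ ≤ 8 * c * 2 ^ k * volume {t | 8 * c * 2 ^ k < Mminus f t} :=
        mul_le_mul_right (measure_mono inter_subset_right) _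
    _ ≤ 8 * ∫⁻ t, ENNReal.ofReal |f t| := mul_volume_lt_Mminus_le f _
    _ ≤ 8 * c * H := by rw [mul_assoc]; exact mul_le_mul_right hf 8

lemma lintegral_ofReal_abs_indicator {S : Set ℝ} (hS : MeasurableSet S) (J : Set ℝ) :
    ∫⁻ y in J, ENNReal.ofReal |S.indicator f y| = ∫⁻ y in J ∩ S, ENNReal.ofReal |f y| := by
  rw [inter_comm, ← setLIntegral_indicator hS]
  congr 1 with y
  by_cases hy : y ∈ S <;> simp [hy]

lemma Mminus_le_indicator_add_indicator_compl {S : Set ℝ} (hS : MeasurableSet S) (t : ℝ) :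
    Mminus f t ≤ Mminus (S.indicator f) t + Mminus (Sᶜ.indicator f) t := by
  refine iSup₂_le fun s hs => ?_
  rw [← lintegral_inter_add_sdiff _ _ hS, sdiff_eq, ← lintegral_ofReal_abs_indicator f hS,
    ← lintegral_ofReal_abs_indicator f hS.compl, ENNReal.add_div]
  exact add_le_add (lintegral_Ioc_div_le_Mminus _ t hs) (lintegral_Ioc_div_le_Mminus _ t hs)

/-- A left interval ending in `(x - h, x]` that reaches beyond `(x - 2h, x]` is at least half
of its extension to a left interval ending at `x`. -/
lemma Mminus_indicator_compl_le {x h t : ℝ} (ht : t ∈ Ioc (x - h) x) :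
    Mminus ((Ioc (x - 2 * h) x)ᶜ.indicator f) t ≤ 2 * Mminus f x := by
  refine iSup₂_le fun s hs => ?_
  rw [lintegral_ofReal_abs_indicator f measurableSet_Ioc.compl,
    ENNReal.div_le_iff (by simpa using hs) ofReal_ne_top]
  rcases le_or_gt s h with hsh | hsh
  · have hempty : Ioc (t - s) t ∩ (Ioc (x - 2 * h) x)ᶜ = ∅ := by
      rw [← sdiff_eq, sdiff_eq_empty]
      exact Ioc_subset_Ioc (by linarith [ht.1]) ht.2
    simp [hempty]
  calc ∫⁻ y in Ioc (t - s) t ∩ (Ioc (x - 2 * h) x)ᶜ, ENNReal.ofReal |f y|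
      ≤ ∫⁻ y in Ioc (t - s) t, ENNReal.ofReal |f y| := lintegral_mono_set inter_subset_left
    _ ≤ Mminus f x * ENNReal.ofReal (x - t + s) := lintegral_Ioc_le_Mminus_mul_of_le f ht.2 hs
    _ ≤ Mminus f x * ENNReal.ofReal (2 * s) :=
        mul_le_mul_right (ENNReal.ofReal_le_ofReal (by linarith [ht.1])) _
    _ = 2 * Mminus f x * ENNReal.ofReal s := by
        rw [ENNReal.ofReal_mul zero_le_two, ENNReal.ofReal_ofNat]; ring

lemma lintegral_ofReal_abs_indicator_Ioc_le (x : ℝ) {s : ℝ} (hs : 0 < s) :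
    ∫⁻ t, ENNReal.ofReal |(Ioc (x - s) x).indicator f t| ≤ Mminus f x * ENNReal.ofReal s := by
  rw [← setLIntegral_univ, lintegral_ofReal_abs_indicator f measurableSet_Ioc, univ_inter]
  exact lintegral_Ioc_le_Mminus_mul f x hs

lemma Mminus_rpow_le_indicator_add {δ : ℝ} (hδ0 : 0 ≤ δ) (hδ1 : δ ≤ 1) {x h t : ℝ}
    (ht : t ∈ Ioc (x - h) x) :
    Mminus f t ^ δ ≤ Mminus ((Ioc (x - 2 * h) x).indicator f) t ^ δ + (2 * Mminus f x) ^ δ :=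
  calc Mminus f t ^ δ
      ≤ (Mminus ((Ioc (x - 2 * h) x).indicator f) t + 2 * Mminus f x) ^ δ :=
        ENNReal.rpow_le_rpow ((Mminus_le_indicator_add_indicator_compl f measurableSet_Ioc t).trans
          (add_le_add le_rfl (Mminus_indicator_compl_le f ht))) hδ0
    _ ≤ _ := ENNReal.rpow_add_le_add_rpow _ _ hδ0 hδ1

end LeftMaximalFunction

theorem setLIntegral_Ioc_Mminus_rpow_le (f : ℝ → ℝ) {δ : ℝ} (hδ0 : 0 < δ) (hδ1 : δ < 1) {x : ℝ}
    (hx : Mminus f x ≠ ⊤) {h : ℝ} (hh : 0 < h) :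
    ∫⁻ t in Ioc (x - h) x, Mminus f t ^ δ ≤
      ENNReal.ofReal (100 / (1 - δ)) * Mminus f x ^ δ * ENNReal.ofReal h := by
  set M := Mminus f x
  rcases eq_or_ne M 0 with hM | hM
  · rw [setLIntegral_congr_fun measurableSet_Ioc fun t ht => by
      rw [Mminus_eq_zero_of_le f ht.2 hM, ENNReal.zero_rpow_of_pos hδ0]]
    simp
  set f₁ := (Ioc (x - 2 * h) x).indicator f
  have hnear : ∫⁻ t, ENNReal.ofReal |f₁ t| ≤ 2 * M * ENNReal.ofReal h := by
    refine (lintegral_ofReal_abs_indicator_Ioc_le f x (by linarith)).trans_eq ?_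
    rw [ENNReal.ofReal_mul zero_le_two, ENNReal.ofReal_ofNat, mul_left_comm, mul_assoc]
  have hkolmogorov : ∫⁻ t in Ioc (x - h) x, Mminus f₁ t ^ δ ≤
      ENNReal.ofReal (5 / (1 - δ)) * (16 * M) ^ δ * ENNReal.ofReal h := by
    have hbound := setLIntegral_rpow_le_of_measure_dyadic_level_set_le hδ0.le hδ1
      (measurable_Mminus f₁ (ne_top_of_le_ne_top (by finiteness) hnear)) measurableSet_Ioc
      ofReal_ne_top (by simp) (volume_inter_dyadic_level_set_le f₁ (mul_ne_zero two_ne_zero hM)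
        (ENNReal.mul_ne_top ofNat_ne_top hx) hnear (Ioc (x - h) x))
    rwa [← mul_assoc, show (8 : ℝ≥0∞) * 2 = 16 by norm_num] at hbound
  calc ∫⁻ t in Ioc (x - h) x, Mminus f t ^ δ
      ≤ ∫⁻ t in Ioc (x - h) x, (Mminus f₁ t ^ δ + (2 * M) ^ δ) :=
        setLIntegral_mono' measurableSet_Ioc fun t ht =>
          Mminus_rpow_le_indicator_add f hδ0.le hδ1.le ht
    _ = (∫⁻ t in Ioc (x - h) x, Mminus f₁ t ^ δ) + (2 * M) ^ δ * ENNReal.ofReal h := by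
        rw [lintegral_add_right _ measurable_const, setLIntegral_const, Real.volume_Ioc,
          show x - (x - h) = h by ring]
    _ ≤ ENNReal.ofReal (5 / (1 - δ)) * (16 * M) ^ δ * ENNReal.ofReal h +
          (2 * M) ^ δ * ENNReal.ofReal h := add_le_add hkolmogorov le_rfl
    _ ≤ ENNReal.ofReal (5 / (1 - δ)) * (16 * M ^ δ) * ENNReal.ofReal h +
          2 * M ^ δ * ENNReal.ofReal h := by
        gcongr <;> exact ENNReal.mul_rpow_le_mul_rpow_of_one_le (by norm_num) _ hδ0.le hδ1.le
    _ = (ENNReal.ofReal (5 / (1 - δ)) * 16 + 2) * M ^ δ * ENNReal.ofReal h := by ring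
    _ ≤ ENNReal.ofReal (100 / (1 - δ)) * M ^ δ * ENNReal.ofReal h := by
        gcongr
        rw [← ENNReal.ofReal_ofNat 16, ← ENNReal.ofReal_ofNat 2, ← ENNReal.ofReal_mul
          (div_nonneg (by norm_num) (sub_nonneg.2 hδ1.le)), ← ENNReal.ofReal_add (by positivity)
          zero_le_two]
        refine ENNReal.ofReal_le_ofReal ?_
        rw [div_mul_eq_mul_div, div_add' _ _ _ (sub_ne_zero.2 hδ1.ne')]
        exact div_le_div_of_nonneg_right (by linarith) (by linarith)

/-- for `0 < δ < 1`, `(M⁻f)^δ ∈ A₁⁺` with constant at most `C/(1-δ)`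
for an absolute constant `C`. -/
theorem stmt0 :
    ∃ C : ℝ, 0 < C ∧
      ∀ δ : ℝ, 0 < δ → δ < 1 →
        ∀ f : ℝ → ℝ, LocallyIntegrable f volume → (∀ᵐ x : ℝ, Mminus f x < ⊤) →
          A1PlusWith (fun x => (Mminus f x).toReal ^ δ) (C / (1 - δ)) := by
  refine ⟨100, by norm_num, fun δ hδ0 hδ1 f _ hfin => ?_⟩
  unfold A1PlusWith
  filter_upwards [hfin] with x hx
  have hMδ : ENNReal.ofReal ((Mminus f x).toReal ^ δ) = Mminus f x ^ δ := by
    rw [ENNReal.toReal_rpow, ENNReal.ofReal_toReal (ENNReal.rpow_ne_top_of_nonneg hδ0.le hx.ne)]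
  rw [ENNReal.ofReal_mul (div_nonneg (by norm_num) (sub_nonneg.2 hδ1.le)), hMδ]
  refine iSup₂_le fun h hh => (ENNReal.div_le_iff (by simpa using hh) ofReal_ne_top).2 ?_
  calc ∫⁻ t in Ioc (x - h) x, ENNReal.ofReal |(Mminus f t).toReal ^ δ|
      ≤ ∫⁻ t in Ioc (x - h) x, Mminus f t ^ δ := lintegral_mono fun t => by
        rw [abs_of_nonneg (by positivity), ENNReal.toReal_rpow]
        exact ENNReal.ofReal_toReal_le
    _ ≤ _ := setLIntegral_Ioc_Mminus_rpow_le f hδ0 hδ1 hx.ne hh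

end
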